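/- Let g be a complex Lie algebra and t ∈ g ⊗ g a symmetric invariant tensor. Then for every n ≥ 1 and every fixed-point-free involution σ of {1,…,2n}, the element φ_t(σ) lies in the center of U(g): φ_t(σ)·u = u·φ_t(σ) for all u ∈ U(g). -/

import Mathlib

/-!
STATEMENT 6: For a complex Lie algebra g and a symmetric invariant tensor t ∈ g ⊗ g,
for every n ≥ 1 and every fixed-point-free involution σ of {1,…,2n}, the element
φ_t(σ) lies in the centre of U(g): φ_t(σ)·u = u·φ_t(σ) for all u ∈ U(g).

φ_t(σ) is the image of t^{⊗n} under the linear map (g⊗g)^{⊗n} → U(g) sending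
(a₁⊗b₁)⊗⋯⊗(aₙ⊗bₙ) to x_{2n}⋯x_1 with x_{j_r} = ι(a_r), x_{σ(j_r)} = ι(b_r), where
the chords {j_r, σ(j_r)} (j_r < σ(j_r)) are listed with j_1 < ⋯ < j_n.
-/


open scoped TensorProduct

noncomputable section

variable {g : Type*} [LieRing g] [LieAlgebra ℂ g]

/-- A fixed-point-free involution. -/
def IsFPFInvolution {N : ℕ} (σ : Equiv.Perm (Fin N)) : Prop :=
  (∀ j, σ (σ j) = j) ∧ ∀ j, σ j ≠ j

variable {n : ℕ}

/-- The set of lower endpoints of the chords of `σ`. -/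
def lowerEnds (σ : Equiv.Perm (Fin (2 * n))) : Finset (Fin (2 * n)) :=
  Finset.univ.filter fun j => j < σ j

lemma card_lowerEnds (σ : Equiv.Perm (Fin (2 * n))) (hσ : IsFPFInvolution σ) :
    (lowerEnds σ).card = n := by
  classical
  have hbij : (lowerEnds σ).card =
      (Finset.univ.filter fun j => ¬ j < σ j).card := by
    apply Finset.card_bij (fun j _ => σ j)
    · intro a ha
      simp only [lowerEnds, Finset.mem_filter, Finset.mem_univ, true_and] at ha ⊢
      rw [hσ.1]
      exact not_lt.2 ha.le
    · intro a ha a' ha' h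
      exact σ.injective h
    · intro b hb
      simp only [Finset.mem_filter, Finset.mem_univ, true_and] at hb
      refine ⟨σ b, ?_, hσ.1 b⟩
      simp only [lowerEnds, Finset.mem_filter, Finset.mem_univ, true_and, hσ.1]
      exact lt_of_le_of_ne (not_lt.1 hb) (hσ.2 b)
  have htot := Finset.card_filter_add_card_filter_not
    (s := (Finset.univ : Finset (Fin (2 * n)))) (p := fun j => j < σ j)
  simp only [Finset.card_univ, Fintype.card_fin] at htot
  have : (lowerEnds σ).card + (Finset.univ.filter fun j => ¬ j < σ j).card = 2 * n := htot
  omega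

/-- Enumeration of the chords in increasing order of their lower endpoints. -/
def chordEnum (σ : Equiv.Perm (Fin (2 * n))) (hσ : IsFPFInvolution σ) :
    Fin n ≃o {x // x ∈ lowerEnds σ} :=
  (lowerEnds σ).orderIsoOfFin (card_lowerEnds σ hσ)

/-- The word position of the letter supplied by tensor slot `i`: slot `2r` holds `a_r`,
placed at the lower endpoint `j_r` of the `r`-th chord, and slot `2r+1` holds `b_r`,
placed at `σ(j_r)`. -/
def unslot (σ : Equiv.Perm (Fin (2 * n))) (hσ : IsFPFInvolution σ) (i : Fin (2 * n)) :
    Fin (2 * n) :=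
  if i.val % 2 = 0 then (chordEnum σ hσ ⟨i.val / 2, by have := i.isLt; omega⟩ : _)
  else σ (chordEnum σ hσ ⟨i.val / 2, by have := i.isLt; omega⟩ : _)

lemma unslot_injective (σ : Equiv.Perm (Fin (2 * n))) (hσ : IsFPFInvolution σ) :
    Function.Injective (unslot σ hσ) := by
  classical
  intro i i' h
  have mem : ∀ r : Fin n, ((chordEnum σ hσ r : Fin (2 * n)) < σ (chordEnum σ hσ r : Fin (2 * n))) := by
    intro r
    have := (chordEnum σ hσ r).2
    simpa only [lowerEnds, Finset.mem_filter, Finset.mem_univ, true_and] using this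
  have henum : ∀ r r' : Fin n, (chordEnum σ hσ r : Fin (2 * n)) = (chordEnum σ hσ r' : Fin (2 * n)) → r = r' := by
    intro r r' hrr
    exact (chordEnum σ hσ).injective (Subtype.ext hrr)
  unfold unslot at h
  by_cases h1 : i.val % 2 = 0 <;> by_cases h2 : i'.val % 2 = 0 <;>
    simp only [h1, h2, if_true, if_false, reduceIte] at h
  · have := henum _ _ h
    have hval : i.val / 2 = i'.val / 2 := congrArg Fin.val this
    exact Fin.ext (by omega)
  · exfalso
    set jr := (chordEnum σ hσ ⟨i.val / 2, _⟩ : Fin (2 * n))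
    set jr' := (chordEnum σ hσ ⟨i'.val / 2, _⟩ : Fin (2 * n))
    have h3 : jr < σ jr := mem _
    have h4 : jr' < σ jr' := mem _
    rw [h] at h3
    rw [hσ.1] at h3
    exact lt_asymm h3 h4
  · exfalso
    set jr := (chordEnum σ hσ ⟨i.val / 2, _⟩ : Fin (2 * n))
    set jr' := (chordEnum σ hσ ⟨i'.val / 2, _⟩ : Fin (2 * n))
    have h3 : jr < σ jr := mem _
    have h4 : jr' < σ jr' := mem _
    rw [← h] at h4
    rw [hσ.1] at h4
    exact lt_asymm h3 h4
  · have := henum _ _ (σ.injective h)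
    have hval : i.val / 2 = i'.val / 2 := congrArg Fin.val this
    exact Fin.ext (by omega)

/-- The bijection tensor-slots ≃ word-positions. -/
def slotEquiv (σ : Equiv.Perm (Fin (2 * n))) (hσ : IsFPFInvolution σ) :
    Fin (2 * n) ≃ Fin (2 * n) :=
  Equiv.ofBijective _ (Finite.injective_iff_bijective.mp (unslot_injective σ hσ))

open PiTensorProduct

attribute [local instance 100] LieRing.ofAssociativeRing

/-- The multilinear map `(z_0, …, z_{2n−1}) ↦ ι(z_0)⋯ι(z_{2n−1})` (product positions). -/
def prodML (g : Type*) [LieRing g] [LieAlgebra ℂ g] (N : ℕ) :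
    MultilinearMap ℂ (fun _ : Fin N => g) (UniversalEnvelopingAlgebra ℂ g) :=
  (MultilinearMap.mkPiAlgebraFin ℂ N (UniversalEnvelopingAlgebra ℂ g)).compLinearMap
    fun _ => (UniversalEnvelopingAlgebra.ι ℂ).toLinearMap

/-- The linear map `g^{⊗2n} → U(g)` (slot-indexed) realising the word
`x_{2n} x_{2n−1} ⋯ x_1` determined by `σ`. -/
def wordMap (σ : Equiv.Perm (Fin (2 * n))) (hσ : IsFPFInvolution σ) :
    (⨂[ℂ] _ : Fin (2 * n), g) →ₗ[ℂ] UniversalEnvelopingAlgebra ℂ g :=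
  PiTensorProduct.lift
    ((prodML g (2 * n)).domDomCongr (Fin.revPerm.trans (slotEquiv σ hσ).symm))

/-- `g ⊗ g` as a binary tensor power. -/
def pair2 (g : Type*) [LieRing g] [LieAlgebra ℂ g] :
    g ⊗[ℂ] g ≃ₗ[ℂ] ⨂[ℂ] _ : Fin 2, g :=
  (TensorProduct.congr (PiTensorProduct.subsingletonEquiv (0 : Fin 1)).symm
      (PiTensorProduct.subsingletonEquiv (0 : Fin 1)).symm).trans
    ((PiTensorProduct.tmulEquiv ℂ g).trans
      (PiTensorProduct.reindex ℂ (fun _ : Fin 1 ⊕ Fin 1 => g) finSumFinEquiv))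

/-- The `N`-th tensor power `t^{⊗N} ∈ g^{⊗2N}`, chord `r` occupying slots `2r, 2r+1`. -/
def tpowEl (t : g ⊗[ℂ] g) : (N : ℕ) → ⨂[ℂ] _ : Fin (2 * N), g
  | 0 => tprod ℂ Fin.elim0
  | (N + 1) =>
      (PiTensorProduct.reindex ℂ (fun _ : Fin (2 * N) ⊕ Fin 2 => g)
          (finSumFinEquiv.trans (finCongr (by omega))))
        ((PiTensorProduct.tmulEquiv ℂ g) (tpowEl t N ⊗ₜ[ℂ] pair2 g t))

/-- `φ_t(σ) ∈ U(g)`: the image of `t^{⊗n}` under the word map determined by `σ`. -/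
def phiEl (t : g ⊗[ℂ] g) (σ : Equiv.Perm (Fin (2 * n))) (hσ : IsFPFInvolution σ) :
    UniversalEnvelopingAlgebra ℂ g :=
  wordMap σ hσ (tpowEl t n)

/-! ### Auxiliary machinery -/

section CoreList

/-- Commutator of an element with a product, expanded by the Leibniz rule. -/
lemma comm_list_prod {A : Type*} [Ring A] (a : A) :
    ∀ (N : ℕ) (f : Fin N → A),
      a * (List.ofFn f).prod - (List.ofFn f).prod * a =
        ∑ k : Fin N, (List.ofFn (Function.update f k (a * f k - f k * a))).prod := by
  intro N
  induction N with
  | zero =>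
      intro f
      simp
  | succ N ih =>
      intro f
      rw [List.ofFn_succ, List.prod_cons, Fin.sum_univ_succ]
      have h0 : (List.ofFn (Function.update f 0 (a * f 0 - f 0 * a))) =
          (a * f 0 - f 0 * a) :: List.ofFn (fun i : Fin N => f i.succ) := by
        rw [List.ofFn_succ]
        have e0 : Function.update f 0 (a * f 0 - f 0 * a) 0 = a * f 0 - f 0 * a :=
          Function.update_self _ _ _
        have etail : (fun i : Fin N => Function.update f 0 (a * f 0 - f 0 * a) i.succ) =
            fun i : Fin N => f i.succ := by
          funext i; exact Function.update_of_ne (Fin.succ_ne_zero i) _ _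
        rw [e0, etail]
      have hs : ∀ k : Fin N,
          (List.ofFn (Function.update f k.succ (a * f k.succ - f k.succ * a))) =
          f 0 :: List.ofFn (Function.update (fun i : Fin N => f i.succ) k
            (a * f k.succ - f k.succ * a)) := by
        intro k
        rw [List.ofFn_succ]
        have e0 : Function.update f k.succ (a * f k.succ - f k.succ * a) 0 = f 0 :=
          Function.update_of_ne (Fin.succ_ne_zero k).symm _ _
        have etail : (fun i : Fin N => Function.update f k.succ
              (a * f k.succ - f k.succ * a) i.succ) =
            Function.update (fun i : Fin N => f i.succ) k (a * f k.succ - f k.succ * a) := by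
          funext i
          rcases eq_or_ne i k with rfl | h
          · simp
          · rw [Function.update_of_ne (fun hc => h (Fin.succ_injective _ hc)),
              Function.update_of_ne h]
        rw [e0, etail]
      rw [h0, List.prod_cons]
      have hsum : ∑ k : Fin N,
          (List.ofFn (Function.update f k.succ (a * f k.succ - f k.succ * a))).prod =
          f 0 * ∑ k : Fin N, (List.ofFn (Function.update (fun i : Fin N => f i.succ) k
            (a * (f k.succ) - (f k.succ) * a))).prod := by
        rw [Finset.mul_sum]
        refine Finset.sum_congr rfl fun k _ => ?_
        rw [hs k, List.prod_cons]
      rw [hsum]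
      have ih' := ih (fun i : Fin N => f i.succ)
      rw [← ih']
      set P := (List.ofFn (fun i : Fin N => f i.succ)).prod
      noncomm_ring

end CoreList

section Derivative

variable (X : g)

/-- Apply `⁅X, ·⁆` in slot `i` of a tensor power. -/
def DslotI (X : g) {ι : Type*} [DecidableEq ι] (i : ι) :
    (⨂[ℂ] _ : ι, g) →ₗ[ℂ] ⨂[ℂ] _ : ι, g :=
  PiTensorProduct.map
    (Function.update (fun _ => (LinearMap.id : g →ₗ[ℂ] g)) i (LieAlgebra.ad ℂ g X))

lemma DslotI_tprod (X : g) {ι : Type*} [DecidableEq ι] (i : ι) (z : ι → g) :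
    DslotI X i (tprod ℂ z) = tprod ℂ (Function.update z i ⁅X, z i⁆) := by
  rw [DslotI, PiTensorProduct.map_tprod]
  congr 1
  funext j
  rcases eq_or_ne j i with rfl | h
  · simp [LieAlgebra.ad_apply]
  · simp [Function.update_of_ne h]

/-- The total derivative `X ·` on a tensor power. -/
def Dtot (X : g) (ι : Type*) [DecidableEq ι] [Fintype ι] :
    (⨂[ℂ] _ : ι, g) →ₗ[ℂ] ⨂[ℂ] _ : ι, g :=
  ∑ i : ι, DslotI X i

lemma Dtot_reindex (X : g) {ι ι₂ : Type*} [DecidableEq ι] [Fintype ι]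
    [DecidableEq ι₂] [Fintype ι₂] (e : ι ≃ ι₂) (w : ⨂[ℂ] _ : ι, g) :
    Dtot X ι₂ (PiTensorProduct.reindex ℂ (fun _ : ι => g) e w)
      = PiTensorProduct.reindex ℂ (fun _ : ι => g) e (Dtot X ι w) := by
  have hslot : ∀ i₂ : ι₂,
      DslotI X i₂ (PiTensorProduct.reindex ℂ (fun _ : ι => g) e w)
        = PiTensorProduct.reindex ℂ (fun _ : ι => g) e (DslotI X (e.symm i₂) w) := by
    intro i₂
    have hfun : (fun j : ι₂ =>
        (Function.update (fun _ : ι => (LinearMap.id : g →ₗ[ℂ] g)) (e.symm i₂)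
          (LieAlgebra.ad ℂ g X)) (e.symm j))
        = Function.update (fun _ : ι₂ => (LinearMap.id : g →ₗ[ℂ] g)) i₂
          (LieAlgebra.ad ℂ g X) := by
      funext j
      rcases eq_or_ne j i₂ with rfl | h
      · simp
      · rw [Function.update_of_ne (fun hc => h (by
          simpa using congrArg e hc)), Function.update_of_ne h]
    rw [DslotI, ← hfun, PiTensorProduct.map_reindex, DslotI]
  simp only [Dtot, LinearMap.sum_apply, map_sum]
  rw [Finset.sum_congr rfl (fun i₂ _ => hslot i₂)]
  rw [← Equiv.sum_comp e (fun i₂ =>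
    PiTensorProduct.reindex ℂ (fun _ : ι => g) e (DslotI X (e.symm i₂) w))]
  simp

lemma DslotI_tmul_inl (X : g) {ι ι₂ : Type*} [DecidableEq ι] [DecidableEq ι₂] (j : ι)
    (w : ⨂[ℂ] _ : ι, g) (u : ⨂[ℂ] _ : ι₂, g) :
    DslotI X (Sum.inl j : ι ⊕ ι₂) (PiTensorProduct.tmulEquiv ℂ g (w ⊗ₜ[ℂ] u)) =
      PiTensorProduct.tmulEquiv ℂ g ((DslotI X j w) ⊗ₜ[ℂ] u) := by
  have key : (DslotI X (Sum.inl j : ι ⊕ ι₂)).comp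
        (PiTensorProduct.tmulEquiv (ι := ι) (ι₂ := ι₂) ℂ g).toLinearMap =
      (PiTensorProduct.tmulEquiv ℂ g).toLinearMap.comp
        (TensorProduct.map (DslotI X j) LinearMap.id) := by
    apply TensorProduct.ext
    apply PiTensorProduct.ext
    apply MultilinearMap.ext
    intro a
    apply PiTensorProduct.ext
    apply MultilinearMap.ext
    intro b
    simp only [LinearMap.compMultilinearMap_apply, LinearMap.compr₂ₛₗ_apply,
      TensorProduct.mk_apply, LinearMap.coe_comp, Function.comp_apply, LinearEquiv.coe_coe,
      TensorProduct.map_tmul, LinearMap.id_coe, id_eq]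
    rw [PiTensorProduct.tmulEquiv_apply, DslotI_tprod, DslotI_tprod,
      PiTensorProduct.tmulEquiv_apply]
    congr 1
    funext i
    cases i with
    | inl i =>
        rcases eq_or_ne i j with rfl | h
        · simp
        · simp [Function.update_of_ne h,
            Function.update_of_ne (fun hc : Sum.inl i = Sum.inl j => h (by simpa using hc))]
    | inr i =>
        simp [Function.update_of_ne (fun hc : Sum.inr i = Sum.inl j => by simp at hc)]
  exact DFunLike.congr_fun key (w ⊗ₜ[ℂ] u)

lemma DslotI_tmul_inr (X : g) {ι ι₂ : Type*} [DecidableEq ι] [DecidableEq ι₂] (j : ι₂)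
    (w : ⨂[ℂ] _ : ι, g) (u : ⨂[ℂ] _ : ι₂, g) :
    DslotI X (Sum.inr j : ι ⊕ ι₂) (PiTensorProduct.tmulEquiv ℂ g (w ⊗ₜ[ℂ] u)) =
      PiTensorProduct.tmulEquiv ℂ g (w ⊗ₜ[ℂ] (DslotI X j u)) := by
  have key : (DslotI X (Sum.inr j : ι ⊕ ι₂)).comp
        (PiTensorProduct.tmulEquiv (ι := ι) (ι₂ := ι₂) ℂ g).toLinearMap =
      (PiTensorProduct.tmulEquiv ℂ g).toLinearMap.comp
        (TensorProduct.map LinearMap.id (DslotI X j)) := by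
    apply TensorProduct.ext
    apply PiTensorProduct.ext
    apply MultilinearMap.ext
    intro a
    apply PiTensorProduct.ext
    apply MultilinearMap.ext
    intro b
    simp only [LinearMap.compMultilinearMap_apply, LinearMap.compr₂ₛₗ_apply,
      TensorProduct.mk_apply, LinearMap.coe_comp, Function.comp_apply, LinearEquiv.coe_coe,
      TensorProduct.map_tmul, LinearMap.id_coe, id_eq]
    rw [PiTensorProduct.tmulEquiv_apply, DslotI_tprod, DslotI_tprod,
      PiTensorProduct.tmulEquiv_apply]
    congr 1
    funext i
    cases i with
    | inr i =>
        rcases eq_or_ne i j with rfl | h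
        · simp
        · simp [Function.update_of_ne h,
            Function.update_of_ne (fun hc : Sum.inr i = Sum.inr j => h (by simpa using hc))]
    | inl i =>
        simp [Function.update_of_ne (fun hc : Sum.inl i = Sum.inr j => by simp at hc)]
  exact DFunLike.congr_fun key (w ⊗ₜ[ℂ] u)

lemma Dtot_tmul (X : g) {ι ι₂ : Type*} [DecidableEq ι] [Fintype ι]
    [DecidableEq ι₂] [Fintype ι₂] (w : ⨂[ℂ] _ : ι, g) (u : ⨂[ℂ] _ : ι₂, g) :
    Dtot X (ι ⊕ ι₂) (PiTensorProduct.tmulEquiv ℂ g (w ⊗ₜ[ℂ] u)) =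
      PiTensorProduct.tmulEquiv ℂ g ((Dtot X ι w) ⊗ₜ[ℂ] u)
        + PiTensorProduct.tmulEquiv ℂ g (w ⊗ₜ[ℂ] (Dtot X ι₂ u)) := by
  simp only [Dtot, LinearMap.sum_apply]
  rw [Fintype.sum_sum_type]
  simp only [DslotI_tmul_inl, DslotI_tmul_inr]
  rw [← map_sum, ← map_sum, ← TensorProduct.sum_tmul, ← TensorProduct.tmul_sum]

end Derivative

section Pair2

lemma pair2_tmul (a b : g) :
    pair2 g (a ⊗ₜ[ℂ] b) = tprod ℂ (fun j : Fin 2 => if j = 0 then a else b) := by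
  have hsub : ∀ x : g, (PiTensorProduct.subsingletonEquiv (0 : Fin 1)).symm x
      = tprod ℂ (fun _ : Fin 1 => x) := by
    intro x
    rw [LinearEquiv.symm_apply_eq, PiTensorProduct.subsingletonEquiv_apply_tprod]
  rw [pair2]
  simp only [LinearEquiv.trans_apply, TensorProduct.congr_tmul, hsub]
  rw [PiTensorProduct.tmulEquiv_apply, PiTensorProduct.reindex_tprod]
  congr 1
  funext j
  fin_cases j <;> rfl

lemma Dtot_pair2 (X : g) (t : g ⊗[ℂ] g) :
    Dtot X (Fin 2) (pair2 g t) = pair2 g ⁅X, t⁆ := by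
  have key : (Dtot X (Fin 2)).comp (pair2 g).toLinearMap
      = (pair2 g).toLinearMap.comp (LieModule.toEnd ℂ g (g ⊗[ℂ] g) X) := by
    apply TensorProduct.ext'
    intro a b
    simp only [LinearMap.coe_comp, Function.comp_apply, LinearEquiv.coe_coe,
      LieModule.toEnd_apply_apply]
    rw [pair2_tmul, TensorProduct.LieModule.lie_tmul_right, map_add, pair2_tmul, pair2_tmul]
    rw [Dtot, LinearMap.sum_apply, Fin.sum_univ_two, DslotI_tprod, DslotI_tprod]
    congr 2
    · funext j
      fin_cases j <;> simp
    · funext j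
      fin_cases j <;> simp
  have h := DFunLike.congr_fun key t
  simpa using h

lemma Dtot_tpowEl (X : g) (t : g ⊗[ℂ] g) (hX : ⁅X, t⁆ = 0) :
    ∀ N : ℕ, Dtot X (Fin (2 * N)) (tpowEl t N) = 0 := by
  intro N
  induction N with
  | zero =>
      rw [Dtot]
      simp
  | succ N ih =>
      rw [tpowEl, Dtot_reindex, Dtot_tmul, ih, Dtot_pair2, hX]
      simp

end Pair2

section Word

lemma wordMap_tprod (σ : Equiv.Perm (Fin (2 * n))) (hσ : IsFPFInvolution σ)
    (z : Fin (2 * n) → g) :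
    wordMap σ hσ (tprod ℂ z) =
      (List.ofFn (fun k => (UniversalEnvelopingAlgebra.ι ℂ
        (z ((Fin.revPerm.trans (slotEquiv σ hσ).symm) k)) :
          UniversalEnvelopingAlgebra ℂ g))).prod := by
  rw [wordMap, PiTensorProduct.lift.tprod]
  rw [MultilinearMap.domDomCongr_apply, prodML, MultilinearMap.compLinearMap_apply,
    MultilinearMap.mkPiAlgebraFin_apply]
  rfl

lemma comm_wordMap (X : g) (σ : Equiv.Perm (Fin (2 * n))) (hσ : IsFPFInvolution σ)
    (w : ⨂[ℂ] _ : Fin (2 * n), g) :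
    UniversalEnvelopingAlgebra.ι ℂ X * wordMap σ hσ w
        - wordMap σ hσ w * UniversalEnvelopingAlgebra.ι ℂ X
      = wordMap σ hσ (Dtot X (Fin (2 * n)) w) := by
  set a := (UniversalEnvelopingAlgebra.ι ℂ X : UniversalEnvelopingAlgebra ℂ g) with ha
  induction w using PiTensorProduct.induction_on with
  | smul_tprod r z =>
      simp only [map_smul, Algebra.mul_smul_comm, Algebra.smul_mul_assoc, ← smul_sub]
      congr 1
      set e := (Fin.revPerm.trans (slotEquiv σ hσ).symm) with he
      rw [wordMap_tprod, ← he]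
      set f := fun k => (UniversalEnvelopingAlgebra.ι ℂ (z (e k)) :
        UniversalEnvelopingAlgebra ℂ g) with hf
      rw [comm_list_prod a (2 * n) f]
      have hbr : ∀ y : g, a * UniversalEnvelopingAlgebra.ι ℂ y
          - UniversalEnvelopingAlgebra.ι ℂ y * a
          = UniversalEnvelopingAlgebra.ι ℂ ⁅X, y⁆ := by
        intro y
        rw [LieHom.map_lie, LieRing.of_associative_ring_bracket, ha]
      have hterm : ∀ k : Fin (2 * n),
          (Function.update f k (a * f k - f k * a)) = fun k' =>
            (UniversalEnvelopingAlgebra.ι ℂ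
              ((Function.update z (e k) ⁅X, z (e k)⁆) (e k')) :
                UniversalEnvelopingAlgebra ℂ g) := by
        intro k
        funext k'
        rcases eq_or_ne k' k with rfl | h
        · rw [Function.update_self, Function.update_self, hf, hbr]
        · rw [Function.update_of_ne h, Function.update_of_ne
            (fun hc => h (e.injective hc)), hf]
      have hL : ∑ k : Fin (2 * n),
          (List.ofFn (Function.update f k (a * f k - f k * a))).prod
          = ∑ k : Fin (2 * n), wordMap σ hσ (tprod ℂ
              (Function.update z (e k) ⁅X, z (e k)⁆)) := by
        refine Finset.sum_congr rfl fun k _ => ?_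
        rw [hterm k, wordMap_tprod, ← he]
      rw [hL]
      rw [Dtot, LinearMap.sum_apply, map_sum]
      have hR : ∑ i : Fin (2 * n), wordMap σ hσ (DslotI X i (tprod ℂ z))
          = ∑ i : Fin (2 * n), wordMap σ hσ (tprod ℂ (Function.update z i ⁅X, z i⁆)) := by
        refine Finset.sum_congr rfl fun i _ => ?_
        rw [DslotI_tprod]
      rw [hR]
      exact Equiv.sum_comp e (fun i => wordMap σ hσ (tprod ℂ (Function.update z i ⁅X, z i⁆)))
  | add x y hx hy =>
      rw [map_add, map_add, map_add, mul_add, add_mul, ← hx, ← hy]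
      abel

end Word

section Central

set_option synthInstance.maxHeartbeats 1000000 in
set_option maxHeartbeats 1000000 in
lemma adjoin_range_ι_eq_top :
    Algebra.adjoin ℂ (Set.range fun x : g => (UniversalEnvelopingAlgebra.ι ℂ x :
      UniversalEnvelopingAlgebra ℂ g)) = ⊤ := by
  set S := Algebra.adjoin ℂ (Set.range fun x : g => (UniversalEnvelopingAlgebra.ι ℂ x :
      UniversalEnvelopingAlgebra ℂ g)) with hS
  have hmem : ∀ x : g, UniversalEnvelopingAlgebra.ι ℂ x ∈ S := fun x =>
    Algebra.subset_adjoin ⟨x, rfl⟩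
  let f : g →ₗ⁅ℂ⁆ S :=
    { toFun := fun x => ⟨UniversalEnvelopingAlgebra.ι ℂ x, hmem x⟩
      map_add' := fun x y => Subtype.ext (by simp)
      map_smul' := fun c x => Subtype.ext (by simp)
      map_lie' := fun {x y} => Subtype.ext (by
        show (UniversalEnvelopingAlgebra.ι ℂ ⁅x, y⁆ : UniversalEnvelopingAlgebra ℂ g) = _
        rw [LieHom.map_lie, LieRing.of_associative_ring_bracket]
        rfl) }
  have key : S.val.comp (UniversalEnvelopingAlgebra.lift ℂ f) = AlgHom.id ℂ _ := by
    apply UniversalEnvelopingAlgebra.hom_ext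
    apply LieHom.ext
    intro x
    show S.val (UniversalEnvelopingAlgebra.lift ℂ f (UniversalEnvelopingAlgebra.ι ℂ x))
      = UniversalEnvelopingAlgebra.ι ℂ x
    rw [UniversalEnvelopingAlgebra.lift_ι_apply]
    rfl
  rw [eq_top_iff]
  intro u _
  have hu : S.val (UniversalEnvelopingAlgebra.lift ℂ f u) = u := by
    have h := DFunLike.congr_fun key u
    simpa using h
  rw [← hu]
  exact (UniversalEnvelopingAlgebra.lift ℂ f u).2

lemma central_of_comm_ι (z : UniversalEnvelopingAlgebra ℂ g)
    (h : ∀ X : g, UniversalEnvelopingAlgebra.ι ℂ X * z = z * UniversalEnvelopingAlgebra.ι ℂ X)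
    (u : UniversalEnvelopingAlgebra ℂ g) : z * u = u * z := by
  have hle : Algebra.adjoin ℂ (Set.range fun x : g => (UniversalEnvelopingAlgebra.ι ℂ x :
      UniversalEnvelopingAlgebra ℂ g)) ≤ Subalgebra.centralizer ℂ ({z} : Set _) := by
    apply Algebra.adjoin_le
    rintro _ ⟨X, rfl⟩
    simp only [SetLike.mem_coe]
    rw [Subalgebra.mem_centralizer_iff]
    rintro w hw
    rw [Set.mem_singleton_iff] at hw
    subst hw
    exact (h X).symm
  have hu : u ∈ Subalgebra.centralizer ℂ ({z} : Set _) := by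
    apply hle
    rw [adjoin_range_ι_eq_top]
    trivial
  exact (Subalgebra.mem_centralizer_iff ℂ).mp hu z rfl

end Central

theorem statement6 (t : g ⊗[ℂ] g)
    (hsymm : (TensorProduct.comm ℂ g g) t = t) (hinv : ∀ X : g, ⁅X, t⁆ = (0 : g ⊗[ℂ] g))
    (hn : 1 ≤ n) (σ : Equiv.Perm (Fin (2 * n))) (hσ : IsFPFInvolution σ) :
    ∀ u : UniversalEnvelopingAlgebra ℂ g, phiEl t σ hσ * u = u * phiEl t σ hσ := by
  intro u
  apply central_of_comm_ι
  intro X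
  have h := comm_wordMap X σ hσ (tpowEl t n)
  rw [Dtot_tpowEl X t (hinv X) n, map_zero] at h
  have h2 := sub_eq_zero.mp h
  rw [phiEl]
  exact h2
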